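/- arXiv:1711.03404 — 5 statements merged into one kernel-verified Lean document; each statement's English description precedes it below -/
import Mathlib

section
/- Let n_l, n_u, K ≥ 1 and n = n_l + n_u. Let W be a symmetric n×n real matrix with nonnegative entries, with rows/columns indexed by the disjoint union of the labelled indices Fin n_l and the unlabelled indices Fin n_u, and write its blocks W_ll, W_lu, W_ul = W_luᵀ, W_uu. Let d_i = Σ_j W_ij and assume d_i > 0 for every i; let D = diag(d) with diagonal blocks D_l and D_u, and for σ ∈ ℝ let D_l^σ, D_u^σ denote the diagonal matrices with entries d_i^σ (real powers of positive reals). Fix α ∈ ℝ and a labelled score matrix F_l ∈ ℝ^{n_l×K}, and assume D_u − W_uu is positive definite. Then the cost J(F_u) = Σ_{k=1}^{K} Σ_{i,j=1}^{n} W_ij (d_i^α F_ik − d_j^α F_jk)², where F ∈ ℝ^{n×K} is the vertical concatenation of F_l and F_u, has a unique minimizer over F_u ∈ ℝ^{n_u×K}; moreover the matrix I_{n_u} − D_u^{−1−α} W_uu D_u^{α} is invertible, the minimizer equals F_u = (I_{n_u} − D_u^{−1−α} W_uu D_u^{α})^{−1} D_u^{−1−α} W_ul D_l^{α} F_l, and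 it is the unique solution of the fixed-point equation F_u = D_u^{−1−α} W_uu D_u^{α} F_u + D_u^{−1−α} W_ul D_l^{α} F_l. -/
/-!
With `x = D^α F`, column by column, the cost is the Dirichlet energy
`Σ W_ij (x_i - x_j)² = 2 xᵀ L x` of the graph Laplacian `L = D - W`. Moving only the unlabelled
rows of `x` by `h` changes it by `4 hᵀ (L x) + 2 hᵀ L_uu h`. At `F*` the linear term vanishes,
because the fixed-point equation is exactly the harmonicity condition `(L x)_u = 0`, and the
quadratic term is positive unless `h = 0`, because `L_uu = D_u - W_uu` is positive definite.
Invertibility and the fixed-point characterization both come from the factorization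
`I - D_u^{-1-α} W_uu D_u^α = D_u^{-1-α} (D_u - W_uu) D_u^α`.
-/

open Matrix

theorem forall_le_iff_eq_of_forall_eq_add {α : Type*} {J q : α → ℝ} {a : α}
    (hJ : ∀ x, J x = J a + q x) (hq : ∀ x, 0 ≤ q x) (hq_eq_zero : ∀ x, q x = 0 → x = a) (x : α) :
    (∀ y, J x ≤ J y) ↔ x = a := by
  refine ⟨fun hx => hq_eq_zero x (le_antisymm ?_ (hq x)), fun hx y => ?_⟩
  · linarith [hx a, hJ x]
  · rw [hx, hJ y]
    linarith [hq y]

namespace Matrix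

section Laplacian

variable {ι : Type*} [Fintype ι] {W : Matrix ι ι ℝ}

def dirichletEnergy (W : Matrix ι ι ℝ) (x : ι → ℝ) : ℝ :=
  ∑ i, ∑ j, W i j * (x i - x j) ^ 2

theorem IsSymm.sum_sum_mul_comm (hW : W.IsSymm) (f : ι → ι → ℝ) :
    ∑ i, ∑ j, W i j * f i j = ∑ i, ∑ j, W i j * f j i := by
  rw [Finset.sum_comm]
  simp only [hW.apply]

theorem IsSymm.dotProduct_mulVec_comm (hW : W.IsSymm) (x y : ι → ℝ) :
    x ⬝ᵥ W *ᵥ y = y ⬝ᵥ W *ᵥ x := by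
  rw [dotProduct_mulVec, ← mulVec_transpose, hW.eq, dotProduct_comm]

variable [DecidableEq ι]

def laplacian (W : Matrix ι ι ℝ) : Matrix ι ι ℝ :=
  diagonal (fun i => ∑ j, W i j) - W

theorem IsSymm.laplacian (hW : W.IsSymm) : W.laplacian.IsSymm :=
  (isSymm_diagonal _).sub hW

theorem laplacian_mulVec_apply (W : Matrix ι ι ℝ) (x : ι → ℝ) (i : ι) :
    (W.laplacian *ᵥ x) i = ∑ j, W i j * (x i - x j) := by
  rw [laplacian, sub_mulVec, Pi.sub_apply, mulVec_diagonal]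
  simp only [mulVec, dotProduct, Finset.sum_mul, ← Finset.sum_sub_distrib, mul_sub]

theorem dirichletEnergy_eq (hW : W.IsSymm) (x : ι → ℝ) :
    W.dirichletEnergy x = 2 * (x ⬝ᵥ W.laplacian *ᵥ x) := by
  have hsplit (i j : ι) : (x i - x j) ^ 2 = x i * (x i - x j) + x j * (x j - x i) := by ring
  simp only [dirichletEnergy, hsplit, mul_add, Finset.sum_add_distrib, two_mul,
    ← hW.sum_sum_mul_comm fun i j => x i * (x i - x j)]
  simp only [dotProduct, laplacian_mulVec_apply, Finset.mul_sum, mul_left_comm]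

theorem dirichletEnergy_add (hW : W.IsSymm) (x h : ι → ℝ) :
    W.dirichletEnergy (x + h) =
      W.dirichletEnergy x + 4 * (h ⬝ᵥ W.laplacian *ᵥ x) + W.dirichletEnergy h := by
  simp only [dirichletEnergy_eq hW, mulVec_add, dotProduct_add, add_dotProduct,
    hW.laplacian.dotProduct_mulVec_comm x h]
  ring

end Laplacian

section Blocks

variable {m n : Type*} [Fintype m] [Fintype n]

theorem sum_elim_zero_dotProduct {R : Type*} [NonUnitalNonAssocSemiring R] (v : n → R)
    (y : m ⊕ n → R) : Sum.elim 0 v ⬝ᵥ y = v ⬝ᵥ (y ∘ Sum.inr) := by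
  simp [dotProduct, Fintype.sum_sum_type]

theorem mulVec_sum_elim_inr {R : Type*} [NonUnitalNonAssocSemiring R]
    (A : Matrix (m ⊕ n) (m ⊕ n) R) (y : m → R) (z : n → R) (i : n) :
    (A *ᵥ Sum.elim y z) (Sum.inr i) = (A.toBlocks₂₁ *ᵥ y + A.toBlocks₂₂ *ᵥ z) i := by
  rw [← fromBlocks_toBlocks A, fromBlocks_mulVec]
  simp

variable [DecidableEq m] [DecidableEq n] {W : Matrix (m ⊕ n) (m ⊕ n) ℝ}

theorem toBlocks₂₁_laplacian (W : Matrix (m ⊕ n) (m ⊕ n) ℝ) :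
    W.laplacian.toBlocks₂₁ = -W.toBlocks₂₁ := by
  ext i j
  simp [laplacian, toBlocks₂₁]

theorem toBlocks₂₂_laplacian (W : Matrix (m ⊕ n) (m ⊕ n) ℝ) :
    W.laplacian.toBlocks₂₂ = diagonal (fun i => ∑ j, W (Sum.inr i) j) - W.toBlocks₂₂ := by
  ext i j
  simp [laplacian, toBlocks₂₂, diagonal_apply]

theorem dirichletEnergy_add_sum_elim_zero (hW : W.IsSymm) {x : m ⊕ n → ℝ}
    (hx : ∀ i, (W.laplacian *ᵥ x) (Sum.inr i) = 0) (v : n → ℝ) :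
    W.dirichletEnergy (x + Sum.elim (0 : m → ℝ) v) =
      W.dirichletEnergy x + 2 * (v ⬝ᵥ W.laplacian.toBlocks₂₂ *ᵥ v) := by
  have hL : (W.laplacian *ᵥ Sum.elim 0 v) ∘ Sum.inr = W.laplacian.toBlocks₂₂ *ᵥ v := by
    ext i
    simp [mulVec_sum_elim_inr]
  have hx' : (W.laplacian *ᵥ x) ∘ Sum.inr = (0 : n → ℝ) := funext hx
  rw [dirichletEnergy_add hW, dirichletEnergy_eq hW (Sum.elim 0 v), sum_elim_zero_dotProduct,
    sum_elim_zero_dotProduct, hx', hL, dotProduct_zero]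
  ring

end Blocks

section DiagonalRpow

variable {n : Type*} [Fintype n] [DecidableEq n] {d : n → ℝ}

theorem diagonal_rpow_mul_diagonal_rpow (hd : ∀ i, 0 < d i) (σ τ : ℝ) :
    diagonal (fun i => d i ^ σ) * diagonal (fun i => d i ^ τ) =
      diagonal (fun i => d i ^ (σ + τ)) := by
  simp [diagonal_mul_diagonal, Real.rpow_add (hd _)]

theorem isUnit_diagonal_rpow (hd : ∀ i, 0 < d i) (σ : ℝ) :
    IsUnit (diagonal fun i => d i ^ σ) :=
  isUnit_diagonal.mpr (Pi.isUnit_iff.mpr fun i => (Real.rpow_pos_of_pos (hd i) σ).ne'.isUnit)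

theorem diagonal_rpow_mul_sub_mul_diagonal_rpow (hd : ∀ i, 0 < d i) (A : Matrix n n ℝ) (α : ℝ) :
    diagonal (fun i => d i ^ (-1 - α)) * (diagonal d - A) * diagonal (fun i => d i ^ α) =
      1 - diagonal (fun i => d i ^ (-1 - α)) * A * diagonal (fun i => d i ^ α) := by
  have hd1 : diagonal d = diagonal fun i => d i ^ (1 : ℝ) := by simp
  rw [Matrix.mul_sub, Matrix.sub_mul, hd1, diagonal_rpow_mul_diagonal_rpow hd,
    diagonal_rpow_mul_diagonal_rpow hd, show -1 - α + 1 + α = 0 by ring]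
  simp

theorem isUnit_one_sub_diagonal_rpow_mul_mul_diagonal_rpow (hd : ∀ i, 0 < d i)
    {A : Matrix n n ℝ} (hA : IsUnit (diagonal d - A)) (α : ℝ) :
    IsUnit (1 - diagonal (fun i => d i ^ (-1 - α)) * A * diagonal (fun i => d i ^ α)) := by
  rw [← diagonal_rpow_mul_sub_mul_diagonal_rpow hd]
  exact ((isUnit_diagonal_rpow hd _).mul hA).mul (isUnit_diagonal_rpow hd _)

theorem eq_diagonal_rpow_mul_add_iff {p : Type*} [Fintype p] (hd : ∀ i, 0 < d i)
    (A : Matrix n n ℝ) (Y Z : Matrix n p ℝ) (α : ℝ) :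
    Z = diagonal (fun i => d i ^ (-1 - α)) * A * diagonal (fun i => d i ^ α) * Z +
        diagonal (fun i => d i ^ (-1 - α)) * Y ↔
      (diagonal d - A) * (diagonal (fun i => d i ^ α) * Z) = Y := by
  have hcancel :
      Function.Injective fun X : Matrix n p ℝ => diagonal (fun i => d i ^ (-1 - α)) * X :=
    mul_right_injective_of_inv (diagonal fun i => d i ^ (1 + α)) _ <| by
      rw [diagonal_rpow_mul_diagonal_rpow hd, show 1 + α + (-1 - α) = 0 by ring]
      simp
  have hfactor : diagonal (fun i => d i ^ (-1 - α)) * ((diagonal d - A) *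
      (diagonal (fun i => d i ^ α) * Z)) =
      Z - diagonal (fun i => d i ^ (-1 - α)) * A * diagonal (fun i => d i ^ α) * Z := by
    rw [← Matrix.mul_assoc, ← Matrix.mul_assoc, diagonal_rpow_mul_sub_mul_diagonal_rpow hd,
      Matrix.sub_mul, Matrix.one_mul]
  rw [← sub_eq_iff_eq_add', ← hfactor]
  exact hcancel.eq_iff

end DiagonalRpow

theorem eq_mul_add_iff_eq_inv_mul {n p R : Type*} [Fintype n] [DecidableEq n] [CommRing R]
    {S : Matrix n n R} (h : IsUnit (1 - S)) (F B : Matrix n p R) :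
    F = S * F + B ↔ F = (1 - S)⁻¹ * B := by
  let := h.invertible
  rw [eq_comm (b := (1 - S)⁻¹ * B), inv_mul_eq_iff_eq_mul_of_invertible, Matrix.sub_mul,
    Matrix.one_mul, eq_sub_iff_add_eq, add_comm, eq_comm]

section PosDef

variable {n κ : Type*} [Fintype n] [Fintype κ] {M : Matrix n n ℝ}

theorem PosDef.dotProduct_mulVec_self_nonneg (hM : M.PosDef) (x : n → ℝ) : 0 ≤ x ⬝ᵥ M *ᵥ x := by
  simpa using hM.posSemidef.dotProduct_mulVec_nonneg x

theorem PosDef.sum_dotProduct_mulVec_transpose_nonneg (hM : M.PosDef) (V : Matrix n κ ℝ) :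
    0 ≤ ∑ k, Vᵀ k ⬝ᵥ M *ᵥ Vᵀ k :=
  Finset.sum_nonneg fun k _ => hM.dotProduct_mulVec_self_nonneg (Vᵀ k)

theorem PosDef.sum_dotProduct_mulVec_transpose_eq_zero_iff (hM : M.PosDef) (V : Matrix n κ ℝ) :
    ∑ k, Vᵀ k ⬝ᵥ M *ᵥ Vᵀ k = 0 ↔ V = 0 := by
  refine ⟨fun h => ?_, by rintro rfl; exact Finset.sum_eq_zero fun k _ => zero_dotProduct _⟩
  ext i k
  by_contra hne
  have hpos := hM.dotProduct_mulVec_pos (x := Vᵀ k) fun h0 => hne (congrFun h0 i)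
  have hzero := (Finset.sum_eq_zero_iff_of_nonneg fun k _ =>
    hM.dotProduct_mulVec_self_nonneg (Vᵀ k)).1 h k (Finset.mem_univ k)
  simp [hzero] at hpos

end PosDef

section Cost

variable {m n κ : Type*} [Fintype m] [Fintype n] [Fintype κ]

noncomputable def normalizedCost (W : Matrix (m ⊕ n) (m ⊕ n) ℝ) (d : m ⊕ n → ℝ) (α : ℝ)
    (F_l : Matrix m κ ℝ) (F_u : Matrix n κ ℝ) : ℝ :=
  ∑ k, W.dirichletEnergy fun i => d i ^ α * Sum.elim F_l F_u i k

variable [DecidableEq m] [DecidableEq n] {W : Matrix (m ⊕ n) (m ⊕ n) ℝ} {d : m ⊕ n → ℝ} {α : ℝ}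
  {F_l : Matrix m κ ℝ} {F : Matrix n κ ℝ}

theorem sum_dirichletEnergy_add_fromRows_zero (hW : W.IsSymm) {X : Matrix (m ⊕ n) κ ℝ}
    (hX : (W.laplacian * X).toRows₂ = 0) (V : Matrix n κ ℝ) :
    ∑ k, W.dirichletEnergy ((X + fromRows 0 V)ᵀ k) =
      ∑ k, W.dirichletEnergy (Xᵀ k) + 2 * ∑ k, Vᵀ k ⬝ᵥ W.laplacian.toBlocks₂₂ *ᵥ Vᵀ k := by
  have hcol (k : κ) : (X + fromRows 0 V)ᵀ k = Xᵀ k + Sum.elim (0 : m → ℝ) (Vᵀ k) := by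
    ext (i | i) <;> simp
  have hharm (k : κ) (i : n) : (W.laplacian *ᵥ Xᵀ k) (Sum.inr i) = 0 := congrFun₂ hX i k
  simp only [hcol, dirichletEnergy_add_sum_elim_zero hW (hharm _), Finset.sum_add_distrib,
    Finset.mul_sum]

theorem normalizedCost_eq_add (hW : W.IsSymm)
    (hF : W.laplacian.toBlocks₂₂ * (diagonal (fun i => d (Sum.inr i) ^ α) * F) =
      W.toBlocks₂₁ * (diagonal (fun i => d (Sum.inl i) ^ α) * F_l))
    (G : Matrix n κ ℝ) :
    W.normalizedCost d α F_l G = W.normalizedCost d α F_l F +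
      2 * ∑ k, (diagonal (fun i => d (Sum.inr i) ^ α) * (G - F))ᵀ k ⬝ᵥ
        W.laplacian.toBlocks₂₂ *ᵥ (diagonal (fun i => d (Sum.inr i) ^ α) * (G - F))ᵀ k := by
  set Dl := diagonal fun i => d (Sum.inl i) ^ α
  set Du := diagonal fun i => d (Sum.inr i) ^ α
  have hcol (G : Matrix n κ ℝ) (k : κ) :
      (fun i => d i ^ α * Sum.elim F_l G i k) = (fromRows (Dl * F_l) (Du * G))ᵀ k := by
    ext (i | i) <;> simp [Sum.elim, Dl, Du, mul_comm]
  have hrows : fromRows (Dl * F_l) (Du * G) =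
      fromRows (Dl * F_l) (Du * F) + fromRows 0 (Du * (G - F)) := by
    ext (i | i) k <;> simp [Matrix.mul_sub]
  have hX : (W.laplacian * fromRows (Dl * F_l) (Du * F)).toRows₂ = 0 := by
    rw [← fromBlocks_toBlocks W.laplacian, fromBlocks_mul_fromRows, toRows₂_fromRows,
      toBlocks₂₁_laplacian, hF, Matrix.neg_mul, neg_add_cancel]
  simp only [normalizedCost, hcol, hrows, sum_dirichletEnergy_add_fromRows_zero hW hX]

theorem forall_normalizedCost_le_iff (hW : W.IsSymm) (hd : ∀ i, 0 < d (Sum.inr i))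
    (hL : W.laplacian.toBlocks₂₂.PosDef)
    (hF : W.laplacian.toBlocks₂₂ * (diagonal (fun i => d (Sum.inr i) ^ α) * F) =
      W.toBlocks₂₁ * (diagonal (fun i => d (Sum.inl i) ^ α) * F_l))
    (G : Matrix n κ ℝ) :
    (∀ G', W.normalizedCost d α F_l G ≤ W.normalizedCost d α F_l G') ↔ G = F := by
  refine forall_le_iff_eq_of_forall_eq_add (normalizedCost_eq_add hW hF)
    (fun G => mul_nonneg zero_le_two (hL.sum_dotProduct_mulVec_transpose_nonneg _))
    (fun G hG => ?_) G
  have hV := (hL.sum_dotProduct_mulVec_transpose_eq_zero_iff _).1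
    ((mul_eq_zero.1 hG).resolve_left two_ne_zero)
  let := (isUnit_diagonal_rpow hd α).invertible
  exact sub_eq_zero.1 (mul_right_injective_of_invertible _ (hV.trans (Matrix.mul_zero _).symm))

end Cost

end Matrix

theorem ssl_closed_form_solution_general
    (n_l n_u K : ℕ)
    (W : Matrix (Fin n_l ⊕ Fin n_u) (Fin n_l ⊕ Fin n_u) ℝ)
    (hWsymm : W.IsSymm)
    (d : Fin n_l ⊕ Fin n_u → ℝ) (hd : ∀ i, d i = ∑ j, W i j)
    (hdpos : ∀ i, 0 < d i)
    (W_uu : Matrix (Fin n_u) (Fin n_u) ℝ)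
    (hWuu : ∀ i j, W_uu i j = W (Sum.inr i) (Sum.inr j))
    (W_ul : Matrix (Fin n_u) (Fin n_l) ℝ)
    (hWul : ∀ i j, W_ul i j = W (Sum.inr i) (Sum.inl j))
    (hPD : (Matrix.diagonal (fun i => d (Sum.inr i)) - W_uu).PosDef)
    (Dl : ℝ → Matrix (Fin n_l) (Fin n_l) ℝ)
    (hDl : ∀ σ, Dl σ = Matrix.diagonal (fun i => d (Sum.inl i) ^ σ))
    (Du : ℝ → Matrix (Fin n_u) (Fin n_u) ℝ)
    (hDu : ∀ σ, Du σ = Matrix.diagonal (fun i => d (Sum.inr i) ^ σ))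
    (α : ℝ) (F_l : Matrix (Fin n_l) (Fin K) ℝ)
    (J : Matrix (Fin n_u) (Fin K) ℝ → ℝ)
    (hJ : ∀ F_u, J F_u = ∑ k : Fin K, ∑ i : Fin n_l ⊕ Fin n_u, ∑ j : Fin n_l ⊕ Fin n_u,
      W i j * (d i ^ α * Sum.elim F_l F_u i k - d j ^ α * Sum.elim F_l F_u j k) ^ 2)
    (Fstar : Matrix (Fin n_u) (Fin K) ℝ)
    (hFstar : Fstar = (1 - Du (-1 - α) * W_uu * Du α)⁻¹ * (Du (-1 - α) * W_ul * Dl α * F_l)) :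
    IsUnit (1 - Du (-1 - α) * W_uu * Du α) ∧
    (∀ F_u : Matrix (Fin n_u) (Fin K) ℝ, (∀ G, J F_u ≤ J G) ↔ F_u = Fstar) ∧
    (∀ F_u : Matrix (Fin n_u) (Fin K) ℝ,
      F_u = Du (-1 - α) * W_uu * Du α * F_u + Du (-1 - α) * W_ul * Dl α * F_l
        ↔ F_u = Fstar) := by
  obtain rfl : W_uu = W.toBlocks₂₂ := Matrix.ext hWuu
  obtain rfl : W_ul = W.toBlocks₂₁ := Matrix.ext hWul
  obtain rfl : J = W.normalizedCost d α F_l := funext hJ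
  have hdu (i : Fin n_u) : 0 < d (Sum.inr i) := hdpos _
  have hL : diagonal (fun i => d (Sum.inr i)) - W.toBlocks₂₂ = W.laplacian.toBlocks₂₂ := by
    simp only [toBlocks₂₂_laplacian, hd]
  have hunit : IsUnit (1 - Du (-1 - α) * W.toBlocks₂₂ * Du α) := by
    simpa only [hDu] using isUnit_one_sub_diagonal_rpow_mul_mul_diagonal_rpow hdu hPD.isUnit α
  have hfix (F : Matrix (Fin n_u) (Fin K) ℝ) :=
    hFstar ▸ eq_mul_add_iff_eq_inv_mul hunit F (Du (-1 - α) * W.toBlocks₂₁ * Dl α * F_l)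
  have hstat : W.laplacian.toBlocks₂₂ * (diagonal (fun i => d (Sum.inr i) ^ α) * Fstar) =
      W.toBlocks₂₁ * (diagonal (fun i => d (Sum.inl i) ^ α) * F_l) := by
    rw [← hL, ← eq_diagonal_rpow_mul_add_iff hdu]
    simpa only [hDu, hDl, Matrix.mul_assoc] using (hfix Fstar).2 rfl
  exact ⟨hunit, fun F => forall_normalizedCost_le_iff hWsymm hdu (hL ▸ hPD) hstat F, hfix⟩

/-- Closed-form solution and stationary-point characterization of the graph-based
semi-supervised learning optimization problem: with a symmetric nonnegative affinity
matrix `W` on the labelled/unlabelled indices, positive degrees `d`, degree blocks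
`D_l`, `D_u` raised to real powers, normalization exponent `α`, fixed labelled scores
`F_l`, and `D_u − W_uu` positive definite, the cost
`J(F_u) = Σ_k Σ_{i,j} W_ij (d_i^α F_ik − d_j^α F_jk)²` has a unique minimizer over
`F_u`; the matrix `I − D_u^{−1−α} W_uu D_u^{α}` is invertible; the minimizer is
`(I − D_u^{−1−α} W_uu D_u^{α})⁻¹ D_u^{−1−α} W_ul D_l^{α} F_l`; and it is the unique
solution of the fixed-point equation
`F_u = D_u^{−1−α} W_uu D_u^{α} F_u + D_u^{−1−α} W_ul D_l^{α} F_l`. -/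
theorem ssl_closed_form_solution
    (n_l n_u K : ℕ) (hnl : 1 ≤ n_l) (hnu : 1 ≤ n_u) (hK : 1 ≤ K)
    (W : Matrix (Fin n_l ⊕ Fin n_u) (Fin n_l ⊕ Fin n_u) ℝ)
    (hWsymm : W.IsSymm) (hWnonneg : ∀ i j, 0 ≤ W i j)
    (d : Fin n_l ⊕ Fin n_u → ℝ) (hd : ∀ i, d i = ∑ j, W i j)
    (hdpos : ∀ i, 0 < d i)
    (W_uu : Matrix (Fin n_u) (Fin n_u) ℝ)
    (hWuu : ∀ i j, W_uu i j = W (Sum.inr i) (Sum.inr j))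
    (W_ul : Matrix (Fin n_u) (Fin n_l) ℝ)
    (hWul : ∀ i j, W_ul i j = W (Sum.inr i) (Sum.inl j))
    (hPD : (Matrix.diagonal (fun i => d (Sum.inr i)) - W_uu).PosDef)
    (Dl : ℝ → Matrix (Fin n_l) (Fin n_l) ℝ)
    (hDl : ∀ σ, Dl σ = Matrix.diagonal (fun i => d (Sum.inl i) ^ σ))
    (Du : ℝ → Matrix (Fin n_u) (Fin n_u) ℝ)
    (hDu : ∀ σ, Du σ = Matrix.diagonal (fun i => d (Sum.inr i) ^ σ))
    (α : ℝ) (F_l : Matrix (Fin n_l) (Fin K) ℝ)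
    (J : Matrix (Fin n_u) (Fin K) ℝ → ℝ)
    (hJ : ∀ F_u, J F_u = ∑ k : Fin K, ∑ i : Fin n_l ⊕ Fin n_u, ∑ j : Fin n_l ⊕ Fin n_u,
      W i j * (d i ^ α * Sum.elim F_l F_u i k - d j ^ α * Sum.elim F_l F_u j k) ^ 2)
    (Fstar : Matrix (Fin n_u) (Fin K) ℝ)
    (hFstar : Fstar = (1 - Du (-1 - α) * W_uu * Du α)⁻¹ * (Du (-1 - α) * W_ul * Dl α * F_l)) :
    IsUnit (1 - Du (-1 - α) * W_uu * Du α) ∧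
    (∀ F_u : Matrix (Fin n_u) (Fin K) ℝ, (∀ G, J F_u ≤ J G) ↔ F_u = Fstar) ∧
    (∀ F_u : Matrix (Fin n_u) (Fin K) ℝ,
      F_u = Du (-1 - α) * W_uu * Du α * F_u + Du (-1 - α) * W_ul * Dl α * F_l
        ↔ F_u = Fstar) :=
  ssl_closed_form_solution_general n_l n_u K W hWsymm d hd hdpos W_uu hWuu W_ul hWul hPD Dl hDl Du
    hDu α F_l J hJ Fstar hFstar
end

section
/- Given real numbers f0, f1, f2, an integer p ≥ 1, vectors μ₁, μ₂ ∈ ℝ^p and real symmetric p×p matrices C₁, C₂, define Δm = −(2 f1/f0) ‖μ₁ − μ₂‖² + (f2/f0 − f1²/f0²)((tr C₁ − tr C₂)/√p)² + (2 f2/f0) tr((C₁ − C₂)²)/p. If f0 > 0, f1 < 0, f2 > 0 and f2·f0 > f1², then Δm ≥ 0; moreover Δm > 0 whenever μ₁ ≠ μ₂ or C₁ ≠ C₂. -/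
open Matrix

lemma trace_sq_eq_sum {p : ℕ} (A : Matrix (Fin p) (Fin p) ℝ) (hA : A.IsSymm) :
    (A * A).trace = ∑ i, ∑ j, (A i j) ^ 2 := by
  simp only [Matrix.trace, Matrix.diag, Matrix.mul_apply]
  refine Finset.sum_congr rfl fun i _ => Finset.sum_congr rfl fun j _ => ?_
  rw [hA.apply, sq]

lemma trace_sq_nonneg {p : ℕ} (A : Matrix (Fin p) (Fin p) ℝ) (hA : A.IsSymm) :
    0 ≤ (A * A).trace := by
  rw [trace_sq_eq_sum A hA]
  positivity

lemma trace_sq_pos {p : ℕ} (A : Matrix (Fin p) (Fin p) ℝ) (hA : A.IsSymm) (h : A ≠ 0) :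
    0 < (A * A).trace := by
  rw [trace_sq_eq_sum A hA]
  obtain ⟨i, j, hij⟩ : ∃ i j, A i j ≠ 0 := by
    by_contra hc; push_neg at hc
    exact h (by ext i j; simp [hc])
  have hi : 0 < ∑ j, (A i j)^2 :=
    Finset.sum_pos' (fun k _ => sq_nonneg _) ⟨j, Finset.mem_univ j, by positivity⟩
  exact Finset.sum_pos' (fun k _ => Finset.sum_nonneg fun l _ => sq_nonneg _)
    ⟨i, Finset.mem_univ i, hi⟩

/-- Sufficiency of the conditions `f'(τ) < 0`, `f''(τ) > 0`, `f''(τ)f(τ) > f'(τ)²`: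
the two-class discrimination quantity `Δm` is nonnegative, and positive as soon as
the two classes differ in mean or covariance. -/
theorem delta_m_positive
    (f0 f1 f2 : ℝ) (p : ℕ) (hp : 1 ≤ p)
    (μ₁ μ₂ : EuclideanSpace ℝ (Fin p))
    (C₁ C₂ : Matrix (Fin p) (Fin p) ℝ) (hC₁ : C₁.IsSymm) (hC₂ : C₂.IsSymm)
    (Δm : ℝ)
    (hΔm : Δm = -(2 * f1 / f0) * ‖μ₁ - μ₂‖ ^ 2
        + (f2 / f0 - f1 ^ 2 / f0 ^ 2) * ((C₁.trace - C₂.trace) / Real.sqrt p) ^ 2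
        + (2 * f2 / f0) * ((C₁ - C₂) * (C₁ - C₂)).trace / p)
    (hf0 : 0 < f0) (hf1 : f1 < 0) (hf2 : 0 < f2) (hstrict : f1 ^ 2 < f2 * f0) :
    0 ≤ Δm ∧ ((μ₁ ≠ μ₂ ∨ C₁ ≠ C₂) → 0 < Δm) := by
  have hA : (C₁ - C₂).IsSymm := hC₁.sub hC₂
  have hT0 : 0 ≤ ((C₁ - C₂) * (C₁ - C₂)).trace := trace_sq_nonneg _ hA
  have hp' : (0 : ℝ) < p := by exact_mod_cast Nat.lt_of_lt_of_le Nat.zero_lt_one hp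
  have hc1 : 0 < -(2 * f1 / f0) := by
    have : 2 * f1 / f0 < 0 := div_neg_of_neg_of_pos (by linarith) hf0
    linarith
  have hc2 : 0 < f2 / f0 - f1 ^ 2 / f0 ^ 2 := by
    have he : f2 / f0 - f1 ^ 2 / f0 ^ 2 = (f2 * f0 - f1 ^ 2) / f0 ^ 2 := by
      field_simp
    rw [he]
    exact div_pos (by linarith) (by positivity)
  have hc3 : 0 < 2 * f2 / f0 := by positivity
  have h1 : 0 ≤ -(2 * f1 / f0) * ‖μ₁ - μ₂‖ ^ 2 := mul_nonneg hc1.le (sq_nonneg _)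
  have h2 : 0 ≤ (f2 / f0 - f1 ^ 2 / f0 ^ 2) * ((C₁.trace - C₂.trace) / Real.sqrt p) ^ 2 :=
    mul_nonneg hc2.le (sq_nonneg _)
  have h3 : 0 ≤ (2 * f2 / f0) * ((C₁ - C₂) * (C₁ - C₂)).trace / p :=
    div_nonneg (mul_nonneg hc3.le hT0) hp'.le
  constructor
  · rw [hΔm]; linarith
  · rintro (hμ | hC)
    · have hne : μ₁ - μ₂ ≠ 0 := sub_ne_zero.mpr hμ
      have hn : 0 < ‖μ₁ - μ₂‖ ^ 2 := pow_pos (norm_pos_iff.mpr hne) 2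
      have := mul_pos hc1 hn
      rw [hΔm]; linarith
    · have hTpos : 0 < ((C₁ - C₂) * (C₁ - C₂)).trace :=
        trace_sq_pos _ hA (sub_ne_zero.mpr hC)
      have := div_pos (mul_pos hc3 hTpos) hp'
      rw [hΔm]; linarith
end

section
/- Given real numbers f0, f1, f2 with f0 > 0 and f1² > f2·f0, let p ≥ 1 be an integer with p·(f1² − f2·f0) > 2·f2·f0, and let ε ≠ 0. With μ₁ = μ₂ ∈ ℝ^p, C₁ = I_p and C₂ = (1 + ε/√p) I_p, the quantity Δm = −(2 f1/f0) ‖μ₁ − μ₂‖² + (f2/f0 − f1²/f0²)((tr C₁ − tr C₂)/√p)² + (2 f2/f0) tr((C₁ − C₂)²)/p equals ε²·((f2·f0 − f1²)/f0² + 2 f2/(f0·p)) and is strictly negative. -/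
open Matrix

/-!
With equal means only the covariance terms of `Δm` survive. Since `C₁ - C₂ = -(ε/√p) I`, the
trace gap scaled by `1/√p` is `-ε` and `tr((C₁ - C₂)²) = ε²`, so
`Δm = ε² (f2/f0 - f1²/f0²) + 2 f2 ε² / (f0 p)`, whose sign is that of
`p (f2 f0 - f1²) + 2 f2 f0 < 0`.
-/

lemma sub_one_add_smul_self {R M : Type*} [Ring R] [AddCommGroup M] [Module R M] (t : R) (x : M) :
    x - (1 + t) • x = (-t) • x := by
  rw [add_smul, one_smul, sub_add_cancel_left, neg_smul]

section ConcentricSpheres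

variable {ι : Type*} [Fintype ι] [DecidableEq ι] [Nonempty ι]

local notation "√n" => Real.sqrt (Fintype.card ι)

lemma trace_gap_concentric_div_sqrt_card (ε : ℝ) :
    ((1 : Matrix ι ι ℝ).trace - ((1 + ε / √n) • (1 : Matrix ι ι ℝ)).trace) / √n = -ε := by
  have hn : 0 < √n := Real.sqrt_pos.mpr (Nat.cast_pos.mpr Fintype.card_pos)
  rw [← trace_sub, sub_one_add_smul_self, trace_smul, trace_one, smul_eq_mul]
  field_simp
  rw [Real.sq_sqrt (Nat.cast_nonneg _)]

lemma trace_sq_gap_concentric (ε : ℝ) :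
    (((1 : Matrix ι ι ℝ) - (1 + ε / √n) • (1 : Matrix ι ι ℝ)) *
      ((1 : Matrix ι ι ℝ) - (1 + ε / √n) • (1 : Matrix ι ι ℝ))).trace = ε ^ 2 := by
  have hn : 0 < √n := Real.sqrt_pos.mpr (Nat.cast_pos.mpr Fintype.card_pos)
  rw [sub_one_add_smul_self, smul_mul_smul, one_mul, trace_smul, trace_one, smul_eq_mul]
  field_simp
  rw [Real.sq_sqrt (Nat.cast_nonneg _)]

end ConcentricSpheres

lemma discrimination_coeff_neg {f0 f1 f2 p : ℝ} (hf0 : 0 < f0) (hp : 0 < p)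
    (hpcond : 2 * f2 * f0 < p * (f1 ^ 2 - f2 * f0)) :
    (f2 * f0 - f1 ^ 2) / f0 ^ 2 + 2 * f2 / (f0 * p) < 0 := by
  have hsum : (f2 * f0 - f1 ^ 2) / f0 ^ 2 + 2 * f2 / (f0 * p)
      = (2 * f2 * f0 - p * (f1 ^ 2 - f2 * f0)) / (f0 ^ 2 * p) := by
    field_simp
    ring
  rw [hsum]
  exact div_neg_of_neg_of_pos (by linarith) (by positivity)

theorem delta_m_negative_concentric_spheres_general
    (f0 f1 f2 : ℝ) (hf0 : 0 < f0)
    (p : ℕ) (hp : 1 ≤ p) (hpcond : 2 * f2 * f0 < (p : ℝ) * (f1 ^ 2 - f2 * f0))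
    (ε : ℝ) (hε : ε ≠ 0)
    (μ₁ μ₂ : EuclideanSpace ℝ (Fin p)) (hμ : μ₁ = μ₂)
    (C₁ C₂ : Matrix (Fin p) (Fin p) ℝ)
    (hC₁ : C₁ = (1 : Matrix (Fin p) (Fin p) ℝ))
    (hC₂ : C₂ = (1 + ε / Real.sqrt p) • (1 : Matrix (Fin p) (Fin p) ℝ))
    (Δm : ℝ)
    (hΔm : Δm = -(2 * f1 / f0) * ‖μ₁ - μ₂‖ ^ 2
        + (f2 / f0 - f1 ^ 2 / f0 ^ 2) * ((C₁.trace - C₂.trace) / Real.sqrt p) ^ 2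
        + (2 * f2 / f0) * ((C₁ - C₂) * (C₁ - C₂)).trace / p) :
    Δm = ε ^ 2 * ((f2 * f0 - f1 ^ 2) / f0 ^ 2 + 2 * f2 / (f0 * p)) ∧ Δm < 0 := by
  subst hμ hC₁ hC₂
  have : Nonempty (Fin p) := ⟨⟨0, hp⟩⟩
  have hgap := trace_gap_concentric_div_sqrt_card (ι := Fin p) ε
  have hsq := trace_sq_gap_concentric (ι := Fin p) ε
  rw [Fintype.card_fin] at hgap hsq
  rw [sub_self, norm_zero, hgap, hsq] at hΔm
  have hΔm_eq : Δm = ε ^ 2 * ((f2 * f0 - f1 ^ 2) / f0 ^ 2 + 2 * f2 / (f0 * p)) := by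
    rw [hΔm]
    field_simp
    ring
  refine ⟨hΔm_eq, hΔm_eq ▸ mul_neg_of_pos_of_neg (by positivity) ?_⟩
  exact discrimination_coeff_neg hf0 (by exact_mod_cast hp) hpcond

/-- Necessity of the condition `f''(τ)f(τ) > f'(τ)²`: on the large dimensional
"concentric spheres" task (`μ₁ = μ₂`, `C₁ = I`, `C₂ = (1 + ε/√p) I`), a kernel with
`f'(τ)² > f''(τ)f(τ)` (and `p(f'(τ)² − f''(τ)f(τ)) > 2 f''(τ)f(τ)`) yields a strictly
negative discrimination quantity `Δm = ε²((f2 f0 − f1²)/f0² + 2 f2/(f0 p))`. -/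
theorem delta_m_negative_concentric_spheres
    (f0 f1 f2 : ℝ) (hf0 : 0 < f0) (hcond : f2 * f0 < f1 ^ 2)
    (p : ℕ) (hp : 1 ≤ p) (hpcond : 2 * f2 * f0 < (p : ℝ) * (f1 ^ 2 - f2 * f0))
    (ε : ℝ) (hε : ε ≠ 0)
    (μ₁ μ₂ : EuclideanSpace ℝ (Fin p)) (hμ : μ₁ = μ₂)
    (C₁ C₂ : Matrix (Fin p) (Fin p) ℝ)
    (hC₁ : C₁ = (1 : Matrix (Fin p) (Fin p) ℝ))
    (hC₂ : C₂ = (1 + ε / Real.sqrt p) • (1 : Matrix (Fin p) (Fin p) ℝ))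
    (Δm : ℝ)
    (hΔm : Δm = -(2 * f1 / f0) * ‖μ₁ - μ₂‖ ^ 2
        + (f2 / f0 - f1 ^ 2 / f0 ^ 2) * ((C₁.trace - C₂.trace) / Real.sqrt p) ^ 2
        + (2 * f2 / f0) * ((C₁ - C₂) * (C₁ - C₂)).trace / p) :
    Δm = ε ^ 2 * ((f2 * f0 - f1 ^ 2) / f0 ^ 2 + 2 * f2 / (f0 * p)) ∧ Δm < 0 :=
  delta_m_negative_concentric_spheres_general f0 f1 f2 hf0 p hp hpcond ε hε μ₁ μ₂ hμ C₁ C₂ hC₁ hC₂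
    Δm hΔm
end

section
/- Following Theorem 1 of the paper, given real numbers f0, f1, f2 with f0 ≠ 0 and f1 ≠ 0, a constant c_l > 0, and the two-class data below with t₁ ≠ t₂, define for β ∈ ℝ the score means [m_b]_a(β) = −(2 f1/f0) ⟨μ̃_a, μ̃_b⟩ + (f2/f0 − f1²/f0²) t̃_a t̃_b + (2 f2/f0) T̃_ab + (β/c_l)(f1/f0) t_a. Then β₀ = c_l · f0 · (ρ₁ − ρ₂) · Δm / (2 f1 (t₁ − t₂)) is the unique real number β such that [m₁]₁(β) − [m₁]₂(β) = [m₂]₂(β) − [m₂]₁(β). -/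
open Matrix
open scoped RealInnerProductSpace

/-!
Writing `μ̄ = ρ₁ μ₁ + ρ₂ μ₂` and using `ρ₁ + ρ₂ = 1`, the centred means are
`μ̃₁ = ρ₂ (μ₁ - μ₂)` and `μ̃₂ = -ρ₁ (μ₁ - μ₂)`, and likewise `C̃_a = s_a (C₁ - C₂)` with
`s = (ρ₂, -ρ₁)`. Hence every `β`-independent part of `[m_b]_a` is `s_a s_b Δm`, and the
balance gap `[m₁]₁ - [m₁]₂ - ([m₂]₂ - [m₂]₁)` equals
`(ρ₂² - ρ₁²) Δm + 2 β f1 (t₁ - t₂) / (c_l f0) = (ρ₂ - ρ₁) Δm + 2 β f1 (t₁ - t₂) / (c_l f0)`,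
an affine function of `β` with nonzero slope, whose only root is `β₀`.
-/

section Centering

variable {R M : Type*} [CommRing R] [AddCommGroup M] [Module R M]

theorem sub_convex_comb_left {ρ₁ ρ₂ : R} (hρ : ρ₁ + ρ₂ = 1) (x y : M) :
    x - (ρ₁ • x + ρ₂ • y) = ρ₂ • (x - y) := by
  rw [eq_sub_of_add_eq hρ]
  module

theorem sub_convex_comb_right {ρ₁ ρ₂ : R} (hρ : ρ₁ + ρ₂ = 1) (x y : M) :
    y - (ρ₁ • x + ρ₂ • y) = (-ρ₁) • (x - y) := by
  rw [eq_sub_of_add_eq' hρ]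
  module

end Centering

theorem real_inner_smul_smul_self {E : Type*} [NormedAddCommGroup E] [InnerProductSpace ℝ E]
    (a b : ℝ) (x : E) : ⟪a • x, b • x⟫ = a * b * ‖x‖ ^ 2 := by
  rw [real_inner_smul_left, real_inner_smul_right, real_inner_self_eq_norm_sq, mul_assoc]

theorem Matrix.trace_smul_mul_smul {n R : Type*} [Fintype n] [CommRing R]
    (a b : R) (A B : Matrix n n R) : ((a • A) * (b • B)).trace = a * b * (A * B).trace := by
  rw [smul_mul_assoc, mul_smul_comm, trace_smul, trace_smul, smul_eq_mul, smul_eq_mul, mul_assoc]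

theorem balance_gap_of_rank_one {m : Fin 2 → Fin 2 → ℝ} {s t : Fin 2 → ℝ} {q κ : ℝ}
    (hm : ∀ b a, m b a = s a * s b * q + κ * t a) :
    m 0 0 - m 0 1 - (m 1 1 - m 1 0) = (s 0 ^ 2 - s 1 ^ 2) * q + 2 * κ * (t 0 - t 1) := by
  simp only [hm]
  ring

theorem beta_zero_balances_classes_general
    (p : ℕ)
    (f0 f1 f2 : ℝ) (hf0 : f0 ≠ 0) (hf1 : f1 ≠ 0) (cl : ℝ) (hcl : 0 < cl)
    (μ₁ μ₂ : EuclideanSpace ℝ (Fin p))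
    (C₁ C₂ : Matrix (Fin p) (Fin p) ℝ)
    (ρ₁ ρ₂ : ℝ) (hρ : ρ₁ + ρ₂ = 1)
    (μt : Fin 2 → EuclideanSpace ℝ (Fin p))
    (hμt0 : μt 0 = μ₁ - (ρ₁ • μ₁ + ρ₂ • μ₂))
    (hμt1 : μt 1 = μ₂ - (ρ₁ • μ₁ + ρ₂ • μ₂))
    (Ct : Fin 2 → Matrix (Fin p) (Fin p) ℝ)
    (hCt0 : Ct 0 = C₁ - (ρ₁ • C₁ + ρ₂ • C₂))
    (hCt1 : Ct 1 = C₂ - (ρ₁ • C₁ + ρ₂ • C₂))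
    (tt : Fin 2 → ℝ) (htt : ∀ a, tt a = (Ct a).trace / Real.sqrt p)
    (Tt : Fin 2 → Fin 2 → ℝ) (hTt : ∀ a b, Tt a b = (Ct a * Ct b).trace / p)
    (t : Fin 2 → ℝ)
    (htne : t 0 ≠ t 1)
    (Δm : ℝ)
    (hΔm : Δm = -(2 * f1 / f0) * ‖μ₁ - μ₂‖ ^ 2
        + (f2 / f0 - f1 ^ 2 / f0 ^ 2) * ((C₁.trace - C₂.trace) / Real.sqrt p) ^ 2
        + (2 * f2 / f0) * ((C₁ - C₂) * (C₁ - C₂)).trace / p)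
    (m : ℝ → Fin 2 → Fin 2 → ℝ)
    (hm : ∀ β b a, m β b a = -(2 * f1 / f0) * ⟪μt a, μt b⟫
        + (f2 / f0 - f1 ^ 2 / f0 ^ 2) * tt a * tt b
        + (2 * f2 / f0) * Tt a b + (β / cl) * (f1 / f0) * t a) :
    ∀ β : ℝ, (m β 0 0 - m β 0 1 = m β 1 1 - m β 1 0) ↔
      β = cl * f0 * (ρ₁ - ρ₂) * Δm / (2 * f1 * (t 0 - t 1)) := by
  intro β
  set s : Fin 2 → ℝ := ![ρ₂, -ρ₁]
  have hμ : ∀ a, μt a = s a • (μ₁ - μ₂) := Fin.forall_fin_two.2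
    ⟨hμt0.trans (sub_convex_comb_left hρ _ _), hμt1.trans (sub_convex_comb_right hρ _ _)⟩
  have hC : ∀ a, Ct a = s a • (C₁ - C₂) := Fin.forall_fin_two.2
    ⟨hCt0.trans (sub_convex_comb_left hρ _ _), hCt1.trans (sub_convex_comb_right hρ _ _)⟩
  have hm_rank_one : ∀ b a, m β b a = s a * s b * Δm + (β / cl * (f1 / f0)) * t a := by
    intro b a
    rw [hm, hμ, hμ, real_inner_smul_smul_self, htt, htt, hTt, hC, hC, trace_smul_mul_smul,
      trace_smul, trace_smul, trace_sub, smul_eq_mul, smul_eq_mul, hΔm]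
    ring
  have hslope : 2 * f1 * (t 0 - t 1) ≠ 0 := by
    have := sub_ne_zero.2 htne
    positivity
  have hs_sq : s 0 ^ 2 - s 1 ^ 2 = ρ₂ - ρ₁ := by
    simp only [s, Matrix.cons_val_zero, Matrix.cons_val_one, neg_sq]
    linear_combination (ρ₂ - ρ₁) * hρ
  rw [← sub_eq_zero, balance_gap_of_rank_one hm_rank_one, hs_sq, eq_div_iff hslope]
  field_simp
  constructor <;> intro h <;> linear_combination h

/-- Proposition 2 of the paper: `β₀ = c_l f0 (ρ₁ − ρ₂) Δm / (2 f1 (t₁ − t₂))` is the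
unique `β` balancing the average score resolutions of the two classes, i.e. such that
`[m₁]₁(β) − [m₁]₂(β) = [m₂]₂(β) − [m₂]₁(β)`. -/
theorem beta_zero_balances_classes
    (p : ℕ) (hp : 1 ≤ p)
    (f0 f1 f2 : ℝ) (hf0 : f0 ≠ 0) (hf1 : f1 ≠ 0) (cl : ℝ) (hcl : 0 < cl)
    (μ₁ μ₂ : EuclideanSpace ℝ (Fin p))
    (C₁ C₂ : Matrix (Fin p) (Fin p) ℝ) (hC₁ : C₁.IsSymm) (hC₂ : C₂.IsSymm)
    (ρ₁ ρ₂ : ℝ) (hρ₁ : 0 < ρ₁) (hρ₂ : 0 < ρ₂) (hρ : ρ₁ + ρ₂ = 1)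
    (μt : Fin 2 → EuclideanSpace ℝ (Fin p))
    (hμt0 : μt 0 = μ₁ - (ρ₁ • μ₁ + ρ₂ • μ₂))
    (hμt1 : μt 1 = μ₂ - (ρ₁ • μ₁ + ρ₂ • μ₂))
    (Ct : Fin 2 → Matrix (Fin p) (Fin p) ℝ)
    (hCt0 : Ct 0 = C₁ - (ρ₁ • C₁ + ρ₂ • C₂))
    (hCt1 : Ct 1 = C₂ - (ρ₁ • C₁ + ρ₂ • C₂))
    (tt : Fin 2 → ℝ) (htt : ∀ a, tt a = (Ct a).trace / Real.sqrt p)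
    (Tt : Fin 2 → Fin 2 → ℝ) (hTt : ∀ a b, Tt a b = (Ct a * Ct b).trace / p)
    (t : Fin 2 → ℝ) (ht : t 0 - t 1 = (C₁.trace - C₂.trace) / Real.sqrt p)
    (htne : t 0 ≠ t 1)
    (Δm : ℝ)
    (hΔm : Δm = -(2 * f1 / f0) * ‖μ₁ - μ₂‖ ^ 2
        + (f2 / f0 - f1 ^ 2 / f0 ^ 2) * ((C₁.trace - C₂.trace) / Real.sqrt p) ^ 2
        + (2 * f2 / f0) * ((C₁ - C₂) * (C₁ - C₂)).trace / p)
    (m : ℝ → Fin 2 → Fin 2 → ℝ)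
    (hm : ∀ β b a, m β b a = -(2 * f1 / f0) * ⟪μt a, μt b⟫
        + (f2 / f0 - f1 ^ 2 / f0 ^ 2) * tt a * tt b
        + (2 * f2 / f0) * Tt a b + (β / cl) * (f1 / f0) * t a) :
    ∀ β : ℝ, (m β 0 0 - m β 0 1 = m β 1 1 - m β 1 0) ↔
      β = cl * f0 * (ρ₁ - ρ₂) * Δm / (2 * f1 * (t 0 - t 1)) :=
  beta_zero_balances_classes_general p f0 f1 f2 hf0 hf1 cl hcl μ₁ μ₂ C₁ C₂ ρ₁ ρ₂ hρ μt hμt0 hμt1 Ct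
    hCt0 hCt1 tt htt Tt hTt t htne Δm hΔm m hm
end

section
/- Let μ be a vector in a real inner product space and set μ₁ = μ, μ₂ = 2μ, μ₃ = 6μ (so that μ₃ = 3μ₂ = 6μ₁). With equal labelled proportions ρ₁ = ρ₂ = ρ₃ = 1/3, let μ̃_a = μ_a − (μ₁ + μ₂ + μ₃)/3, and suppose the classes have equal covariances, so that t̃_a = 0, T̃_ab = 0 and t₁ = t₂ = t₃ for all a, b. Following Theorem 1 of the paper, given real numbers f0, f1, f2 with f0 ≠ 0, c_l > 0, β ∈ ℝ, define [m_b]_a = −(2 f1/f0) ⟨μ̃_a, μ̃_b⟩ + (f2/f0 − f1²/f0²) t̃_a t̃_b + (2 f2/f0) T̃_ab + (β/c_l)(f1/f0) t_a. Then [m₂]₂ − [m₂]₁ = (2 f1/f0)‖μ‖², [m₃]₃ − [m₃]₁ = −(30 f1/f0)‖μ‖², and hence ([m₂]₂ − [m₂]₁)·([m₃]₃ − [m₃]₁) = −60 (f1/f0)² ‖μ‖⁴ ≤ 0; in particular, if f1 ≠ 0 and μ ≠ 0, at least one of [m₂]₂ − [m₂]₁ and [m₃]₃ − [m₃]₁ is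 strictly negative. -/
open scoped RealInnerProductSpace

/-- Algebraic core of Section 4.1: for three classes with means `μ₃ = 3μ₂ = 6μ₁`,
equal covariances and equal labelled class sizes, the score mean gaps satisfy
`[m₂]₂ − [m₂]₁ = (2 f1/f0)‖μ‖²` and `[m₃]₃ − [m₃]₁ = −(30 f1/f0)‖μ‖²`, whose
product is `−60 (f1/f0)² ‖μ‖⁴ ≤ 0`; if `f1 ≠ 0` and `μ ≠ 0`, one of the two gaps
is strictly negative, so the algorithm is inconsistent. -/
theorem three_class_inconsistency
    (E : Type*) [NormedAddCommGroup E] [InnerProductSpace ℝ E]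
    (μ : E) (μs : Fin 3 → E)
    (hμ1 : μs 0 = μ) (hμ2 : μs 1 = (2 : ℝ) • μ) (hμ3 : μs 2 = (6 : ℝ) • μ)
    (μt : Fin 3 → E) (hμt : ∀ a, μt a = μs a - (3 : ℝ)⁻¹ • (μs 0 + μs 1 + μs 2))
    (tt : Fin 3 → ℝ) (htt : ∀ a, tt a = 0)
    (Tt : Fin 3 → Fin 3 → ℝ) (hTt : ∀ a b, Tt a b = 0)
    (t : Fin 3 → ℝ) (ht01 : t 0 = t 1) (ht12 : t 1 = t 2)
    (f0 f1 f2 : ℝ) (hf0 : f0 ≠ 0) (cl : ℝ) (hcl : 0 < cl) (β : ℝ)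
    (m : Fin 3 → Fin 3 → ℝ)
    (hm : ∀ b a, m b a = -(2 * f1 / f0) * ⟪μt a, μt b⟫
        + (f2 / f0 - f1 ^ 2 / f0 ^ 2) * tt a * tt b
        + (2 * f2 / f0) * Tt a b + (β / cl) * (f1 / f0) * t a) :
    m 1 1 - m 1 0 = (2 * f1 / f0) * ‖μ‖ ^ 2 ∧
    m 2 2 - m 2 0 = -(30 * f1 / f0) * ‖μ‖ ^ 2 ∧
    (m 1 1 - m 1 0) * (m 2 2 - m 2 0) = -60 * (f1 / f0) ^ 2 * ‖μ‖ ^ 4 ∧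
    (m 1 1 - m 1 0) * (m 2 2 - m 2 0) ≤ 0 ∧
    (f1 ≠ 0 → μ ≠ 0 → (m 1 1 - m 1 0 < 0 ∨ m 2 2 - m 2 0 < 0)) := by
  have h0 : μt 0 = (-2 : ℝ) • μ := by
    rw [hμt 0, hμ1, hμ2, hμ3]; module
  have h1 : μt 1 = (-1 : ℝ) • μ := by
    rw [hμt 1, hμ1, hμ2, hμ3]; module
  have h2 : μt 2 = (3 : ℝ) • μ := by
    rw [hμt 2, hμ1, hμ2, hμ3]; module
  have hmm : ∀ b a, m b a = -(2 * f1 / f0) * ⟪μt a, μt b⟫ + (β / cl) * (f1 / f0) * t a := by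
    intro b a; rw [hm b a, htt, hTt]; ring
  have hinner : ∀ (c d : ℝ), ⟪c • μ, d • μ⟫ = c * d * ‖μ‖ ^ 2 := by
    intro c d
    rw [real_inner_smul_left, real_inner_smul_right, real_inner_self_eq_norm_sq]
    ring
  have e1 : m 1 1 - m 1 0 = (2 * f1 / f0) * ‖μ‖ ^ 2 := by
    rw [hmm 1 1, hmm 1 0, h0, h1, hinner, hinner, ht01]; ring
  have e2 : m 2 2 - m 2 0 = -(30 * f1 / f0) * ‖μ‖ ^ 2 := by
    rw [hmm 2 2, hmm 2 0, h0, h2, hinner, hinner, ht01, ht12]; ring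
  have e1' : m 1 1 - m 1 0 = 2 * (f1 / f0) * ‖μ‖ ^ 2 := by rw [e1]; ring
  have e2' : m 2 2 - m 2 0 = -(30 * (f1 / f0)) * ‖μ‖ ^ 2 := by rw [e2]; ring
  refine ⟨e1, e2, ?_, ?_, ?_⟩
  · rw [e1, e2]; ring
  · rw [e1', e2']
    have : (0:ℝ) ≤ (f1 / f0) ^ 2 * (‖μ‖ ^ 2) ^ 2 := by positivity
    nlinarith [this]
  · intro hf1 hμ
    have hn : 0 < ‖μ‖ ^ 2 := by
      have : ‖μ‖ ≠ 0 := norm_ne_zero_iff.mpr hμ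
      positivity
    rcases lt_trichotomy (f1 / f0) 0 with h | h | h
    · left; rw [e1']
      have := mul_pos (mul_pos (by norm_num : (0:ℝ) < 2) (neg_pos.mpr h)) hn
      nlinarith [this]
    · exact absurd h (div_ne_zero hf1 hf0)
    · right; rw [e2']
      have := mul_pos (mul_pos (by norm_num : (0:ℝ) < 30) h) hn
      nlinarith [this]
end
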